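/- Let g* = (g*₁,…,g*_K) be a minimizer of 𝒢^L over all potentials. Then for every i ∈ {1,…,K} and every x_i ∈ 𝒳_i, −(L − 1) + η log(min_{j∈{1,…,K}, y∈𝒳ⱼ} μⱼ(y)) − ηL log(K C* n) ≤ g*_i(x_i) ≤ 1. -/

import Mathlib

open scoped ENNReal BigOperators

noncomputable section

/-- `S_K^L`: the nonempty subsets of `{1,…,K}` of size at most `L`. -/
def SKL (K L : ℕ) : Finset (Finset (Fin K)) :=
  Finset.univ.filter fun A => A.Nonempty ∧ A.card ≤ L

/-- `S_K^L(i)`: the members of `S_K^L` containing `i`. -/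
def SKLi (K L : ℕ) (i : Fin K) : Finset (Finset (Fin K)) :=
  (SKL K L).filter fun A => i ∈ A

variable {K : ℕ} (𝒳 : Fin K → Type*) [∀ i, Fintype (𝒳 i)] [∀ i, DecidableEq (𝒳 i)]

/-- The `i`-th marginal `Pᵢ#π_A` of a coupling `π_A` on `𝒳^A`
(zero when `i ∉ A`). -/
def marg (A : Finset (Fin K)) (π : ((j : A) → 𝒳 j.1) → ℝ) (i : Fin K) (xi : 𝒳 i) : ℝ :=
  if hi : i ∈ A then
    ∑ x : (j : A) → 𝒳 j.1, (if x ⟨i, hi⟩ = xi then π x else 0)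
  else 0

/-- `Σ_{A ∈ S_K^L(i)} Pᵢ#π_A`, evaluated at `xi`. -/
def totMarg (L : ℕ) (π : (A : Finset (Fin K)) → ((j : A) → 𝒳 j.1) → ℝ)
    (i : Fin K) (xi : 𝒳 i) : ℝ :=
  ∑ A ∈ SKLi K L i, marg 𝒳 A (π A) i xi

/-- The couplings `π_A(g)` induced by potentials `g`, interpreted as `0` where the
cost is `+∞`. -/
def piInd (η : ℝ) (c : (A : Finset (Fin K)) → ((j : A) → 𝒳 j.1) → ℝ≥0∞)
    (g : (i : Fin K) → 𝒳 i → ℝ) (A : Finset (Fin K)) (x : (j : A) → 𝒳 j.1) : ℝ :=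
  if c A x = ⊤ then 0
  else Real.exp ((∑ j : A, g j.1 (x j) - (1 + (c A x).toReal)) / η)

/-- The dual objective `𝒢^L`. -/
def dualObj (η : ℝ) (L : ℕ) (c : (A : Finset (Fin K)) → ((j : A) → 𝒳 j.1) → ℝ≥0∞)
    (μ : (i : Fin K) → 𝒳 i → ℝ) (g : (i : Fin K) → 𝒳 i → ℝ) : ℝ :=
  (∑ A ∈ SKL K L, ∑ x : (j : A) → 𝒳 j.1, piInd 𝒳 η c g A x)
    - (1 / η) * ∑ i : Fin K, ∑ xi : 𝒳 i, g i xi * μ i xi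

/-- Unnormalized Kullback–Leibler divergence (convention `0 · log 0 = 0`). -/
def KLdiv {Z : Type*} [Fintype Z] (α β : Z → ℝ) : ℝ :=
  (∑ z, (β z - α z)) + ∑ z, α z * Real.log (α z / β z)

/-- ℓ¹ norm of a vector on a finite set. -/
def l1 {Z : Type*} [Fintype Z] (v : Z → ℝ) : ℝ := ∑ z, |v z|

/-- `g : ℕ → potentials` is generated by the greedy Sinkhorn iteration: `g⁰ = 0`,
and at each step a coordinate `I` maximizing the KL-discrepancy of the `I`-th
marginal is updated by the Sinkhorn formula, all others kept fixed. -/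
def IsGreedySinkhorn (η : ℝ) (L : ℕ)
    (c : (A : Finset (Fin K)) → ((j : A) → 𝒳 j.1) → ℝ≥0∞)
    (μ : (i : Fin K) → 𝒳 i → ℝ) (g : ℕ → (i : Fin K) → 𝒳 i → ℝ) : Prop :=
  (∀ i xi, g 0 i xi = 0) ∧
  ∀ t : ℕ, ∃ I : Fin K,
    (∀ i : Fin K,
      KLdiv (μ i) (totMarg 𝒳 L (piInd 𝒳 η c (g t)) i) ≤
        KLdiv (μ I) (totMarg 𝒳 L (piInd 𝒳 η c (g t)) I)) ∧
    (∀ xI : 𝒳 I, g (t + 1) I xI =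
      g t I xI + η * Real.log (μ I xI)
        - η * Real.log (totMarg 𝒳 L (piInd 𝒳 η c (g t)) I xI)) ∧
    (∀ i : Fin K, i ≠ I → g (t + 1) i = g t i)

/-- The marginal error `E_t` of the greedy Sinkhorn iteration. -/
def Err (η : ℝ) (L : ℕ) (c : (A : Finset (Fin K)) → ((j : A) → 𝒳 j.1) → ℝ≥0∞)
    (μ : (i : Fin K) → 𝒳 i → ℝ) (g : ℕ → (i : Fin K) → 𝒳 i → ℝ) (t : ℕ) : ℝ :=
  ∑ i : Fin K,
    l1 (fun xi : 𝒳 i => μ i xi - totMarg 𝒳 L (piInd 𝒳 η c (g t)) i xi)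

/-- `C* := maxᵢ nᵢ / n`. -/
def Cstar (n : ℝ) : ℝ := ((Finset.univ.sup fun i : Fin K => Fintype.card (𝒳 i) : ℕ) : ℝ) / n

/-- `min_{j, y} μ_j(y)`. -/
def muMin (μ : (i : Fin K) → 𝒳 i → ℝ) : ℝ :=
  sInf {v : ℝ | ∃ (j : Fin K) (y : 𝒳 j), v = μ j y}

/-- `R̄ := L − η log min_{j,y} μ_j(y) + η L log(K C* n)`. -/
def Rbar (η : ℝ) (L : ℕ) (n : ℝ) (μ : (i : Fin K) → 𝒳 i → ℝ) : ℝ :=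
  (L : ℝ) - η * Real.log (muMin 𝒳 μ) + η * L * Real.log (K * Cstar 𝒳 n * n)

/-!
At a minimizer `g*` the derivative of `𝒢^L` in the direction of a single potential value
`g*ᵢ(xᵢ)` vanishes, which says that the induced couplings have the prescribed marginals:
`Σ_{A ∋ i} Pᵢ#π_A(g*) = μᵢ`. The singleton `{i}` contributes `exp((g*ᵢ(xᵢ) - 1)/η) ≤ μᵢ(xᵢ) ≤ 1`,
so `g* ≤ 1`. Feeding this back, every term of `π_A(g*)` with `i`-th coordinate `xᵢ` is at most
`exp((g*ᵢ(xᵢ) + L - 2)/η)`, and there are at most `K^L` sets `A` and `(C* n)^L` such terms each;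
taking logarithms in `μᵢ(xᵢ) ≤ (K C* n)^L exp((g*ᵢ(xᵢ) + L - 2)/η)` gives the lower bound.
-/

open Finset

lemma apply_le_sum_sum {ι : Type*} [Fintype ι] {X : ι → Type*} [∀ i, Fintype (X i)]
    {f : (i : ι) → X i → ℝ} (hf : ∀ i x, 0 ≤ f i x) (i : ι) (x : X i) :
    f i x ≤ ∑ j, ∑ y, f j y :=
  (single_le_sum (fun y _ => hf i y) (mem_univ x)).trans
    (single_le_sum (f := fun j => ∑ y, f j y) (fun j _ => sum_nonneg fun y _ => hf j y)
      (mem_univ i))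

lemma le_of_le_pow_mul_exp {a b u η : ℝ} {L : ℕ} (hη : 0 < η) (ha : 0 < a) (hb : 0 < b)
    (h : a ≤ b ^ L * Real.exp (u / η)) : η * Real.log a - η * L * Real.log b ≤ u := by
  have hlog : Real.log a ≤ L * Real.log b + u / η := by
    calc Real.log a ≤ Real.log (b ^ L * Real.exp (u / η)) := Real.log_le_log ha h
      _ = L * Real.log b + u / η := by
        rw [Real.log_mul (by positivity) (by positivity), Real.log_pow, Real.log_exp]
  have := mul_le_mul_of_nonneg_left hlog hη.le
  rw [mul_add, mul_div_cancel₀ _ hη.ne'] at this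
  linarith

lemma singleton_mem_SKLi {K L : ℕ} (hL : 1 ≤ L) (i : Fin K) : {i} ∈ SKLi K L i := by
  simp [SKLi, SKL, hL]

lemma card_SKL_le (K L : ℕ) : #(SKL K L) ≤ K ^ L := by
  classical
  calc #(SKL K L) ≤ #(univ.image fun f : Fin L → Fin K => univ.image f) := by
        refine card_le_card fun A hA => ?_
        obtain ⟨hne, hcard⟩ := (mem_filter.mp hA).2
        have : Nonempty A := hne.to_subtype
        obtain ⟨e⟩ : Nonempty (A ↪ Fin L) :=
          Function.Embedding.nonempty_of_card_le (by simpa using hcard)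
        -- `A` is the range of `Fin L → A → Fin K`, through a surjection `Fin L → A`
        have hsurj := Function.invFun_surjective e.injective
        refine mem_image.mpr ⟨fun t => (Function.invFun e t : A).1, mem_univ _, ?_⟩
        ext a
        simp only [mem_image, mem_univ, true_and]
        constructor
        · rintro ⟨t, rfl⟩
          exact (Function.invFun e t).2
        · intro ha
          obtain ⟨t, ht⟩ := hsurj ⟨a, ha⟩
          exact ⟨t, congrArg Subtype.val ht⟩
    _ ≤ Fintype.card (Fin L → Fin K) := card_image_le
    _ = K ^ L := by simp

section MaxCard

/-- `maxᵢ nᵢ`, so that `C* n = maxCard 𝒳`. -/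
def maxCard {ι : Type*} [Fintype ι] (X : ι → Type*) [∀ i, Fintype (X i)] : ℕ :=
  univ.sup fun i => Fintype.card (X i)

variable {ι : Type*} [Fintype ι] {X : ι → Type*} [∀ i, Fintype (X i)]

lemma card_le_maxCard (i : ι) : Fintype.card (X i) ≤ maxCard X :=
  le_sup (f := fun i => Fintype.card (X i)) (mem_univ i)

lemma one_le_maxCard {i : ι} (x : X i) : 1 ≤ maxCard X :=
  (Fintype.card_pos_iff.mpr ⟨x⟩).trans_le (card_le_maxCard i)

lemma card_pi_le_maxCard_pow [DecidableEq ι] (A : Finset ι) :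
    Fintype.card ((j : A) → X j.1) ≤ maxCard X ^ #A := by
  rw [Fintype.card_pi]
  calc ∏ j : A, Fintype.card (X j.1) ≤ ∏ _j : A, maxCard X :=
        Finset.prod_le_prod' fun j _ => card_le_maxCard j.1
    _ = maxCard X ^ #A := by simp

lemma Cstar_mul_self {K : ℕ} (𝒳 : Fin K → Type*) [∀ i, Fintype (𝒳 i)] {n : ℝ} (hn : n ≠ 0) :
    Cstar 𝒳 n * n = maxCard 𝒳 :=
  div_mul_cancel₀ _ hn

end MaxCard

section MuMin

variable {K : ℕ} {𝒳 : Fin K → Type*} [∀ i, Fintype (𝒳 i)]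

lemma finite_setOf_exists_eq_apply (μ : (i : Fin K) → 𝒳 i → ℝ) :
    {v : ℝ | ∃ (j : Fin K) (y : 𝒳 j), v = μ j y}.Finite := by
  convert Set.finite_range fun p : Σ j, 𝒳 j => μ p.1 p.2 using 1
  ext v
  simp [eq_comm]

lemma muMin_le (μ : (i : Fin K) → 𝒳 i → ℝ) (i : Fin K) (xi : 𝒳 i) : muMin 𝒳 μ ≤ μ i xi :=
  csInf_le (finite_setOf_exists_eq_apply μ).bddBelow ⟨i, xi, rfl⟩

lemma muMin_pos {μ : (i : Fin K) → 𝒳 i → ℝ} (hμ : ∀ i xi, 0 < μ i xi) {i : Fin K} (xi : 𝒳 i) :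
    0 < muMin 𝒳 μ := by
  obtain ⟨j, y, hjy⟩ := Set.Nonempty.csInf_mem (s := {v : ℝ | ∃ (j : Fin K) (y : 𝒳 j), v = μ j y})
    ⟨μ i xi, i, xi, rfl⟩ (finite_setOf_exists_eq_apply μ)
  rw [muMin, hjy]
  exact hμ j y

end MuMin

section ShiftAt

variable {ι : Type*} [DecidableEq ι] {X : ι → Type*} [∀ i, DecidableEq (X i)]
  (g : (i : ι) → X i → ℝ) (i : ι) (xi : X i) (t : ℝ)

def shiftAt : (j : ι) → X j → ℝ := g + Pi.single i (Pi.single xi t)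

lemma shiftAt_of_ne {j : ι} (hj : j ≠ i) (y : X j) : shiftAt g i xi t j y = g j y := by
  simp [shiftAt, Pi.single_eq_of_ne hj]

lemma shiftAt_self (y : X i) : shiftAt g i xi t i y = g i y + if y = xi then t else 0 := by
  simp [shiftAt, Pi.single_apply]

lemma sum_shiftAt_apply (A : Finset ι) (x : (j : A) → X j.1) :
    ∑ j : A, shiftAt g i xi t j.1 (x j)
      = ∑ j : A, g j.1 (x j) + if h : i ∈ A then (if x ⟨i, h⟩ = xi then t else 0) else 0 := by
  by_cases hi : i ∈ A
  · rw [dif_pos hi, ← add_sum_erase _ _ (mem_univ ⟨i, hi⟩), ← add_sum_erase _ _ (mem_univ ⟨i, hi⟩),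
      sum_congr rfl fun j hj =>
        shiftAt_of_ne g i xi t (fun h => ne_of_mem_erase hj (Subtype.ext h)) _]
    simp only [shiftAt_self]
    ring
  · rw [dif_neg hi, add_zero]
    exact sum_congr rfl fun j _ => shiftAt_of_ne g i xi t (fun h => hi (h ▸ j.2)) _

end ShiftAt

section PiInd

variable {X : Fin K → Type*} {η : ℝ} {c : (A : Finset (Fin K)) → ((j : A) → X j.1) → ℝ≥0∞}

lemma piInd_nonneg (g : (i : Fin K) → X i → ℝ) (A : Finset (Fin K)) (x : (j : A) → X j.1) :
    0 ≤ piInd X η c g A x := by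
  unfold piInd
  split_ifs
  exacts [le_rfl, (Real.exp_pos _).le]

lemma piInd_le_exp_of_le_one {L : ℕ} {g : (i : Fin K) → X i → ℝ} (hη : 0 < η)
    (hg : ∀ j y, g j y ≤ 1) {A : Finset (Fin K)} (hA : #A ≤ L) {i : Fin K} (hi : i ∈ A)
    {xi : X i} {x : (j : A) → X j.1} (hx : x ⟨i, hi⟩ = xi) :
    piInd X η c g A x ≤ Real.exp ((g i xi + L - 2) / η) := by
  have hsum : ∑ j : A, g j.1 (x j) ≤ g i xi + ((L : ℝ) - 1) := by
    rw [← add_sum_erase _ _ (mem_univ ⟨i, hi⟩), hx]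
    have hrest := sum_le_card_nsmul (univ.erase (⟨i, hi⟩ : A)) (fun j => g j.1 (x j)) 1
      fun j _ => hg _ _
    have hcard : (#(univ.erase (⟨i, hi⟩ : A)) : ℝ) ≤ L - 1 := by
      rw [card_erase_of_mem (mem_univ _), card_univ, Fintype.card_coe,
        Nat.cast_sub (card_pos.mpr ⟨i, hi⟩), Nat.cast_one]
      have : (#A : ℝ) ≤ L := by exact_mod_cast hA
      linarith
    rw [nsmul_eq_mul, mul_one] at hrest
    linarith
  unfold piInd
  split_ifs
  · positivity
  · exact Real.exp_le_exp.mpr <| div_le_div_of_nonneg_right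
      (by linarith [ENNReal.toReal_nonneg (a := c A x)]) hη.le

variable [∀ i, DecidableEq (X i)] (g : (i : Fin K) → X i → ℝ) (i : Fin K) (xi : X i) (t : ℝ)

lemma piInd_shiftAt (A : Finset (Fin K)) (x : (j : A) → X j.1) :
    piInd X η c (shiftAt g i xi t) A x
      = piInd X η c g A x + (Real.exp (t / η) - 1) *
          if h : i ∈ A then (if x ⟨i, h⟩ = xi then piInd X η c g A x else 0) else 0 := by
  unfold piInd
  rw [sum_shiftAt_apply]
  by_cases hc : c A x = ⊤
  · simp [hc]
  by_cases hi : i ∈ A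
  · by_cases hx : x ⟨i, hi⟩ = xi
    · simp only [hc, hi, hx, if_false, if_true, dif_pos]
      rw [add_sub_right_comm, add_div, Real.exp_add]
      ring
    · simp [hc, hi, hx]
  · simp [hc, hi]

end PiInd

section Marginals

variable {𝒳} {η : ℝ} {c : (A : Finset (Fin K)) → ((j : A) → 𝒳 j.1) → ℝ≥0∞}

lemma marg_nonneg {A : Finset (Fin K)} {π : ((j : A) → 𝒳 j.1) → ℝ} (hπ : ∀ x, 0 ≤ π x)
    (i : Fin K) (xi : 𝒳 i) : 0 ≤ marg 𝒳 A π i xi := by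
  unfold marg
  split_ifs
  exacts [sum_nonneg fun x _ => by split_ifs; exacts [hπ x, le_rfl], le_rfl]

lemma marg_le_card_mul {A : Finset (Fin K)} {π : ((j : A) → 𝒳 j.1) → ℝ} {i : Fin K} (hi : i ∈ A)
    {xi : 𝒳 i} {B : ℝ} (hB : 0 ≤ B) (hπ : ∀ x, x ⟨i, hi⟩ = xi → π x ≤ B) :
    marg 𝒳 A π i xi ≤ Fintype.card ((j : A) → 𝒳 j.1) * B := by
  rw [marg, dif_pos hi]
  calc ∑ x, (if x ⟨i, hi⟩ = xi then π x else 0) ≤ ∑ _x : (j : A) → 𝒳 j.1, B :=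
        sum_le_sum fun x _ => by split_ifs with hx; exacts [hπ x hx, hB]
    _ = Fintype.card ((j : A) → 𝒳 j.1) * B := by simp

lemma sum_SKL_marg (L : ℕ) (π : (A : Finset (Fin K)) → ((j : A) → 𝒳 j.1) → ℝ) (i : Fin K)
    (xi : 𝒳 i) : ∑ A ∈ SKL K L, marg 𝒳 A (π A) i xi = totMarg 𝒳 L π i xi := by
  rw [totMarg, SKLi, sum_filter]
  refine sum_congr rfl fun A _ => ?_
  split_ifs with hi
  · rfl
  · simp [marg, hi]

end Marginals

section Stationarity

variable {𝒳} {η : ℝ} {c : (A : Finset (Fin K)) → ((j : A) → 𝒳 j.1) → ℝ≥0∞}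
  (g : (i : Fin K) → 𝒳 i → ℝ) (i : Fin K) (xi : 𝒳 i) (t : ℝ)

lemma sum_piInd_shiftAt (A : Finset (Fin K)) :
    ∑ x : (j : A) → 𝒳 j.1, piInd 𝒳 η c (shiftAt g i xi t) A x
      = ∑ x, piInd 𝒳 η c g A x + (Real.exp (t / η) - 1) * marg 𝒳 A (piInd 𝒳 η c g A) i xi := by
  simp only [piInd_shiftAt, sum_add_distrib, ← mul_sum]
  unfold marg
  split_ifs <;> simp

lemma sum_shiftAt_mul (μ : (i : Fin K) → 𝒳 i → ℝ) :
    ∑ j, ∑ y : 𝒳 j, shiftAt g i xi t j y * μ j y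
      = ∑ j, ∑ y : 𝒳 j, g j y * μ j y + t * μ i xi := by
  simp only [shiftAt, Pi.add_apply, add_mul, sum_add_distrib, add_right_inj]
  rw [Fintype.sum_eq_single i fun j hj => by simp [Pi.single_eq_of_ne hj],
    Fintype.sum_eq_single xi fun y hy => by simp [Pi.single_eq_of_ne hy]]
  simp

lemma dualObj_shiftAt (L : ℕ) (μ : (i : Fin K) → 𝒳 i → ℝ) :
    dualObj 𝒳 η L c μ (shiftAt g i xi t)
      = dualObj 𝒳 η L c μ g + (Real.exp (t / η) - 1) * totMarg 𝒳 L (piInd 𝒳 η c g) i xi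
          - t / η * μ i xi := by
  unfold dualObj
  rw [sum_congr rfl fun A _ => sum_piInd_shiftAt g i xi t A, sum_add_distrib, ← mul_sum,
    sum_SKL_marg, sum_shiftAt_mul]
  ring

variable {g} in
theorem totMarg_piInd_eq_of_forall_dualObj_le (hη : η ≠ 0) {L : ℕ}
    {μ : (i : Fin K) → 𝒳 i → ℝ} (hg : ∀ g', dualObj 𝒳 η L c μ g ≤ dualObj 𝒳 η L c μ g') :
    totMarg 𝒳 L (piInd 𝒳 η c g) i xi = μ i xi := by
  set T := totMarg 𝒳 L (piInd 𝒳 η c g) i xi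
  let f : ℝ → ℝ := fun t => (Real.exp (t / η) - 1) * T - t / η * μ i xi
  have hmin : IsLocalMin f 0 := Filter.Eventually.of_forall fun t => by
    have := hg (shiftAt g i xi t)
    rw [dualObj_shiftAt] at this
    simp only [f, zero_div, Real.exp_zero, sub_self, zero_mul]
    linarith
  have hderiv : HasDerivAt f (Real.exp (0 / η) * (1 / η) * T - 1 / η * μ i xi) 0 :=
    ((((hasDerivAt_id 0).div_const η).exp.sub_const 1).mul_const T).sub
      (((hasDerivAt_id 0).div_const η).mul_const (μ i xi))
  have := hmin.hasDerivAt_eq_zero hderiv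
  rw [zero_div, Real.exp_zero, one_mul, ← mul_sub, mul_eq_zero, sub_eq_zero] at this
  exact this.resolve_left (one_div_ne_zero hη)

end Stationarity

section Bounds

variable {𝒳} {η : ℝ} {c : (A : Finset (Fin K)) → ((j : A) → 𝒳 j.1) → ℝ≥0∞} {L : ℕ}
  {g : (i : Fin K) → 𝒳 i → ℝ}

lemma exp_le_totMarg_piInd (hL : 1 ≤ L)
    (hc : ∀ (i : Fin K) (x : (j : ({i} : Finset (Fin K))) → 𝒳 j.1), c {i} x = 0)
    (i : Fin K) (xi : 𝒳 i) : Real.exp ((g i xi - 1) / η) ≤ totMarg 𝒳 L (piInd 𝒳 η c g) i xi := by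
  have hi : i ∈ ({i} : Finset (Fin K)) := mem_singleton_self i
  let x₀ : (j : ({i} : Finset (Fin K))) → 𝒳 j.1 :=
    fun j => cast (congrArg 𝒳 (mem_singleton.mp j.2).symm) xi
  calc Real.exp ((g i xi - 1) / η) = piInd 𝒳 η c g {i} x₀ := by
        simp [piInd, hc, x₀]
    _ = if x₀ ⟨i, hi⟩ = xi then piInd 𝒳 η c g {i} x₀ else 0 := (if_pos rfl).symm
    _ ≤ marg 𝒳 {i} (piInd 𝒳 η c g {i}) i xi := by
        rw [marg, dif_pos hi]
        exact single_le_sum (f := fun x => if x ⟨i, hi⟩ = xi then piInd 𝒳 η c g {i} x else 0)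
          (fun x _ => by split_ifs; exacts [piInd_nonneg g _ x, le_rfl]) (mem_univ x₀)
    _ ≤ totMarg 𝒳 L (piInd 𝒳 η c g) i xi :=
        single_le_sum (fun A _ => marg_nonneg (piInd_nonneg g A) i xi) (singleton_mem_SKLi hL i)

lemma le_one_of_totMarg_piInd_le_one (hη : 0 < η) (hL : 1 ≤ L)
    (hc : ∀ (i : Fin K) (x : (j : ({i} : Finset (Fin K))) → 𝒳 j.1), c {i} x = 0)
    {i : Fin K} {xi : 𝒳 i} (h : totMarg 𝒳 L (piInd 𝒳 η c g) i xi ≤ 1) : g i xi ≤ 1 := by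
  have := Real.exp_le_one_iff.mp ((exp_le_totMarg_piInd hL hc i xi).trans h)
  rw [div_le_iff₀ hη, zero_mul] at this
  linarith

lemma totMarg_piInd_le (hη : 0 < η) (hg : ∀ j y, g j y ≤ 1) (i : Fin K) (xi : 𝒳 i) :
    totMarg 𝒳 L (piInd 𝒳 η c g) i xi
      ≤ ((K : ℝ) * maxCard 𝒳) ^ L * Real.exp ((g i xi + L - 2) / η) := by
  set B := Real.exp ((g i xi + L - 2) / η)
  have hmarg : ∀ A ∈ SKLi K L i, marg 𝒳 A (piInd 𝒳 η c g A) i xi ≤ (maxCard 𝒳 : ℝ) ^ L * B := by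
    intro A hA
    have hAL : #A ≤ L := (mem_filter.mp (mem_filter.mp hA).1).2.2
    have hi : i ∈ A := (mem_filter.mp hA).2
    calc marg 𝒳 A (piInd 𝒳 η c g A) i xi ≤ Fintype.card ((j : A) → 𝒳 j.1) * B :=
          marg_le_card_mul hi (Real.exp_pos _).le fun x hx => piInd_le_exp_of_le_one hη hg hAL hi hx
      _ ≤ (maxCard 𝒳 : ℝ) ^ L * B := by
          gcongr
          exact_mod_cast (card_pi_le_maxCard_pow A).trans
            (Nat.pow_le_pow_right (one_le_maxCard xi) hAL)
  calc totMarg 𝒳 L (piInd 𝒳 η c g) i xi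
      ≤ ∑ _A ∈ SKLi K L i, (maxCard 𝒳 : ℝ) ^ L * B := sum_le_sum hmarg
    _ = #(SKLi K L i) * ((maxCard 𝒳 : ℝ) ^ L * B) := by simp
    _ ≤ (K : ℝ) ^ L * ((maxCard 𝒳 : ℝ) ^ L * B) := by
        gcongr
        exact_mod_cast (card_le_card (filter_subset _ _)).trans (card_SKL_le K L)
    _ = ((K : ℝ) * maxCard 𝒳) ^ L * B := by ring

end Bounds

theorem stmt12_general (K L : ℕ) (hL : 1 ≤ L)
    (𝒳 : Fin K → Type*) [∀ i, Fintype (𝒳 i)] [∀ i, DecidableEq (𝒳 i)]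
    (η : ℝ) (hη : 0 < η) (n : ℝ) (hn : 0 < n)
    (c : (A : Finset (Fin K)) → ((j : A) → 𝒳 j.1) → ℝ≥0∞)
    (hc : ∀ (i : Fin K) (x : (j : ({i} : Finset (Fin K))) → 𝒳 j.1), c {i} x = 0)
    (μ : (i : Fin K) → 𝒳 i → ℝ) (hμpos : ∀ i xi, 0 < μ i xi)
    (hmass : ∑ i : Fin K, ∑ xi : 𝒳 i, μ i xi = 1)
    (gstar : (i : Fin K) → 𝒳 i → ℝ)
    (hstar : ∀ g' : (i : Fin K) → 𝒳 i → ℝ,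
      dualObj 𝒳 η L c μ gstar ≤ dualObj 𝒳 η L c μ g') :
    ∀ (i : Fin K) (xi : 𝒳 i),
      -((L : ℝ) - 1) + η * Real.log (muMin 𝒳 μ)
          - η * L * Real.log (K * Cstar 𝒳 n * n) ≤ gstar i xi ∧
      gstar i xi ≤ 1 := by
  intro i xi
  have hstat j y := totMarg_piInd_eq_of_forall_dualObj_le j y hη.ne' hstar
  have hle_one : ∀ j y, gstar j y ≤ 1 := fun j y =>
    le_one_of_totMarg_piInd_le_one hη hL hc <|
      (hstat j y).trans_le (hmass ▸ apply_le_sum_sum (fun j y => (hμpos j y).le) j y)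
  refine ⟨?_, hle_one i xi⟩
  have hKm : 0 < (K : ℝ) * maxCard 𝒳 := by
    have := i.pos
    have := one_le_maxCard xi
    positivity
  have hμ := (muMin_le μ i xi).trans ((hstat i xi).symm.trans_le (totMarg_piInd_le hη hle_one i xi))
  have := le_of_le_pow_mul_exp hη (muMin_pos hμpos xi) hKm hμ
  rw [mul_assoc (K : ℝ), Cstar_mul_self 𝒳 hn.ne']
  linarith

/-- if `g*` minimizes the dual objective `𝒢^L`, then for every `i`
and `x_i ∈ 𝒳 i`,
`−(L−1) + η log min_{j,y} μ_j(y) − η L log(K C* n) ≤ g*_i(x_i) ≤ 1`. -/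
theorem stmt12 (K L : ℕ) (hK : 0 < K) (hL : 1 ≤ L) (hLK : L ≤ K)
    (𝒳 : Fin K → Type*) [∀ i, Fintype (𝒳 i)] [∀ i, DecidableEq (𝒳 i)]
    [∀ i, Nonempty (𝒳 i)]
    (η : ℝ) (hη : 0 < η) (n : ℝ) (hn : 0 < n)
    (c : (A : Finset (Fin K)) → ((j : A) → 𝒳 j.1) → ℝ≥0∞)
    (hc : ∀ (i : Fin K) (x : (j : ({i} : Finset (Fin K))) → 𝒳 j.1), c {i} x = 0)
    (μ : (i : Fin K) → 𝒳 i → ℝ) (hμpos : ∀ i xi, 0 < μ i xi)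
    (hmass : ∑ i : Fin K, ∑ xi : 𝒳 i, μ i xi = 1)
    (gstar : (i : Fin K) → 𝒳 i → ℝ)
    (hstar : ∀ g' : (i : Fin K) → 𝒳 i → ℝ,
      dualObj 𝒳 η L c μ gstar ≤ dualObj 𝒳 η L c μ g') :
    ∀ (i : Fin K) (xi : 𝒳 i),
      -((L : ℝ) - 1) + η * Real.log (muMin 𝒳 μ)
          - η * L * Real.log (K * Cstar 𝒳 n * n) ≤ gstar i xi ∧
      gstar i xi ≤ 1 :=
  stmt12_general K L hL 𝒳 η hη n hn c hc μ hμpos hmass gstar hstar
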